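/- Fix integers 1 ≤ C < F. Then the cache hit ratio, viewed as a function of the Zipf exponent, γ ↦ (Σ_{f=1}^{C} f^{-γ}) / (Σ_{g=1}^{F} g^{-γ}), is strictly increasing on (0, ∞). (A higher Zipf exponent makes the popularity distribution more peaked, so caching the C most popular files captures a strictly larger fraction of requests.) -/

import Mathlib

open Finset

/-! Split the files into the cached ones `s = [1, C]` and the rest `t = (C, F]`, so the hit ratio
is `A / (A + B)` with `A = Σ_s f^{-γ}`, `B = Σ_t g^{-γ}`. Raising `γ` from `x` to `y` multiplies
each term `f^{-γ}` by `f^{x-y}`, which is larger for the smaller cached indices; summing the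
pairwise inequalities gives `B(y) A(x) < B(x) A(y)`, i.e. `B / A` strictly decreases. -/

theorem Real.rpow_neg_mul_rpow_neg_lt {a b x y : ℝ} (ha : 0 < a) (hab : a < b) (hxy : x < y) :
    b ^ (-y) * a ^ (-x) < b ^ (-x) * a ^ (-y) := by
  have hb : 0 < b := ha.trans hab
  have key : b ^ (x - y) < a ^ (x - y) := Real.rpow_lt_rpow_of_neg ha hab (sub_neg.mpr hxy)
  calc b ^ (-y) * a ^ (-x) = b ^ (x - y) * (b ^ (-x) * a ^ (-x)) := by
        rw [← mul_assoc, ← Real.rpow_add hb]; ring_nf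
    _ < a ^ (x - y) * (b ^ (-x) * a ^ (-x)) := by gcongr
    _ = b ^ (-x) * a ^ (-y) := by
        rw [mul_left_comm, ← Real.rpow_add ha]; ring_nf

theorem Finset.sum_rpow_neg_mul_sum_rpow_neg_lt {ι κ : Type*} {s : Finset ι} {t : Finset κ}
    {u : ι → ℝ} {v : κ → ℝ} (hs : s.Nonempty) (ht : t.Nonempty) (hu : ∀ i ∈ s, 0 < u i)
    (huv : ∀ i ∈ s, ∀ j ∈ t, u i < v j) {x y : ℝ} (hxy : x < y) :
    (∑ j ∈ t, v j ^ (-y)) * ∑ i ∈ s, u i ^ (-x) < (∑ j ∈ t, v j ^ (-x)) * ∑ i ∈ s, u i ^ (-y) := by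
  rw [sum_mul_sum, sum_mul_sum]
  refine sum_lt_sum_of_nonempty ht fun j hj => sum_lt_sum_of_nonempty hs fun i hi => ?_
  exact Real.rpow_neg_mul_rpow_neg_lt (hu i hi) (huv i hi j hj) hxy

theorem div_add_lt_div_add_of_mul_lt_mul {a b a' b' : ℝ} (ha : 0 < a) (hb : 0 < b)
    (ha' : 0 < a') (hb' : 0 < b') (h : b' * a < b * a') : a / (a + b) < a' / (a' + b') := by
  rw [div_lt_div_iff₀ (by positivity) (by positivity)]
  linarith

theorem strictMono_sum_rpow_neg_div_add {ι κ : Type*} {s : Finset ι} {t : Finset κ}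
    {u : ι → ℝ} {v : κ → ℝ} (hs : s.Nonempty) (ht : t.Nonempty) (hu : ∀ i ∈ s, 0 < u i)
    (huv : ∀ i ∈ s, ∀ j ∈ t, u i < v j) :
    StrictMono fun γ : ℝ =>
      (∑ i ∈ s, u i ^ (-γ)) / ((∑ i ∈ s, u i ^ (-γ)) + ∑ j ∈ t, v j ^ (-γ)) := by
  obtain ⟨i₀, hi₀⟩ := hs
  have hv : ∀ j ∈ t, 0 < v j := fun j hj => (hu i₀ hi₀).trans (huv i₀ hi₀ j hj)
  have hA : ∀ γ : ℝ, 0 < ∑ i ∈ s, u i ^ (-γ) := fun γ =>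
    sum_pos (fun i hi => Real.rpow_pos_of_pos (hu i hi) _) ⟨i₀, hi₀⟩
  have hB : ∀ γ : ℝ, 0 < ∑ j ∈ t, v j ^ (-γ) := fun γ =>
    sum_pos (fun j hj => Real.rpow_pos_of_pos (hv j hj) _) ht
  intro x y hxy
  exact div_add_lt_div_add_of_mul_lt_mul (hA x) (hB x) (hA y) (hB y)
    (sum_rpow_neg_mul_sum_rpow_neg_lt ⟨i₀, hi₀⟩ ht hu huv hxy)

theorem Finset.sum_Icc_one_eq_sum_Icc_one_add_sum_Ioc {M : Type*} [AddCommMonoid M] (g : ℕ → M)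
    {C F : ℕ} (hCF : C ≤ F) :
    ∑ i ∈ Icc 1 F, g i = ∑ i ∈ Icc 1 C, g i + ∑ i ∈ Ioc C F, g i := by
  rw [← zero_add 1, Icc_add_one_left_eq_Ioc, Icc_add_one_left_eq_Ioc,
    sum_Ioc_consecutive _ C.zero_le hCF]

/-- For fixed `1 ≤ C < F`, the cache hit ratio
`γ ↦ (Σ_{f=1}^{C} f^{-γ}) / (Σ_{g=1}^{F} g^{-γ})`
is strictly increasing in the Zipf exponent `γ` on `(0, ∞)`. -/
theorem cache_hit_ratio_strict_mono_in_zipf_exponent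
    (C F : ℕ) (hC : 1 ≤ C) (hCF : C < F) :
    StrictMonoOn
      (fun γ : ℝ =>
        (∑ f ∈ Finset.Icc 1 C, (f : ℝ) ^ (-γ)) /
        (∑ g ∈ Finset.Icc 1 F, (g : ℝ) ^ (-γ)))
      (Set.Ioi (0 : ℝ)) := by
  simp_rw [sum_Icc_one_eq_sum_Icc_one_add_sum_Ioc _ hCF.le]
  refine (strictMono_sum_rpow_neg_div_add ⟨1, mem_Icc.mpr ⟨le_rfl, hC⟩⟩
    ⟨C + 1, mem_Ioc.mpr ⟨C.lt_succ_self, hCF⟩⟩ (fun f hf => ?_) fun f hf g hg => ?_).strictMonoOn _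
  · exact_mod_cast (mem_Icc.mp hf).1
  · exact_mod_cast (mem_Icc.mp hf).2.trans_lt (mem_Ioc.mp hg).1
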